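/- arXiv:2102.08654 — 2 statements merged into one kernel-verified Lean document; each statement's English description precedes it below -/
import Mathlib

section
/- The number e is transcendental over ℚ. -/
/-!
Suppose `a₀ + a₁ e + ⋯ + aₙ eⁿ = 0` with integers `aᵢ` and `a₀ ≠ 0`. Hermite's auxiliary
polynomial `X ^ (p - 1) * ((X - 1) ⋯ (X - n)) ^ p` gives, for every large prime `p`, an integer
`N` prime to `p` and integers `mₖ` with `|N eᵏ - p mₖ| ≤ c ^ p / (p - 1)!` for `1 ≤ k ≤ n`
(`LindemannWeierstrass.exp_polynomial_approx`). Then `a₀ N + p ∑ aₖ mₖ` is an integer of absolute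
value `< 1`, hence zero, so `p ∣ a₀ N`: impossible once `p > |a₀|`.
-/

open Polynomial Filter Finset
open scoped Nat Topology

theorem exists_aeval_eq_zero_coeff_zero_ne_zero {A : Type*} [CommRing A] [IsDomain A]
    [Algebra ℚ A] {x : A} (hx : x ≠ 0) (h : IsAlgebraic ℚ x) :
    ∃ a : ℤ[X], aeval x a = 0 ∧ a.coeff 0 ≠ 0 := by
  obtain ⟨b, hb0, hbx⟩ := (IsFractionRing.isAlgebraic_iff ℤ ℚ A).mpr h
  obtain ⟨a, hba, hXa⟩ := b.exists_eq_pow_rootMultiplicity_mul_and_not_dvd hb0 0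
  refine ⟨a, ?_, fun h0 => hXa (by simpa [X_dvd_iff] using h0)⟩
  rw [hba, map_mul, map_pow] at hbx
  simpa [hx] using hbx

theorem tendsto_pow_div_factorial_sub_one_atTop (c : ℝ) :
    Tendsto (fun p : ℕ => c ^ p / (p - 1)!) atTop (𝓝 0) := by
  have h := ((FloorSemiring.tendsto_pow_div_factorial_atTop c).const_mul c).comp
    (tendsto_sub_atTop_nat 1)
  rw [mul_zero] at h
  refine h.congr' ?_
  filter_upwards [eventually_ge_atTop 1] with p hp
  simp [Function.comp, ← mul_div_assoc, ← pow_succ', Nat.sub_add_cancel hp]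

theorem exists_int_approx_exp_one_pow (n : ℕ) :
    ∃ c : ℝ, ∀ᶠ p : ℕ in atTop, p.Prime → ∃ N : ℤ, ¬ (p : ℤ) ∣ N ∧ ∃ m : ℕ → ℤ,
      ∀ k ∈ Icc 1 n, |N * Real.exp 1 ^ k - p * m k| ≤ c ^ p / (p - 1)! := by
  set f : ℤ[X] := ∏ k ∈ Icc 1 n, (X - C (k : ℤ))
  have hf0 : f.eval 0 ≠ 0 := by
    simp only [f, eval_prod, eval_sub, eval_X, eval_C, zero_sub, prod_ne_zero_iff, mem_Icc]
    intro k hk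
    omega
  obtain ⟨c, hc⟩ := LindemannWeierstrass.exp_polynomial_approx f hf0
  refine ⟨c, ?_⟩
  filter_upwards [eventually_gt_atTop (f.eval 0).natAbs] with p hp hprime
  obtain ⟨N, hpN, g, -, hg⟩ := hc p hp hprime
  refine ⟨N, hpN, fun k => g.eval (k : ℤ), fun k hk => ?_⟩
  have hroot : (k : ℂ) ∈ f.aroots ℂ := by
    rw [mem_aroots]
    refine ⟨(monic_prod_of_monic _ _ fun j _ => monic_X_sub_C _).ne_zero, ?_⟩
    simp only [f, map_prod, map_sub, aeval_X, eq_intCast]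
    exact prod_eq_zero hk (by simp)
  have h := hg hroot
  have hg_eval : aeval (k : ℂ) g = ((g.eval (k : ℤ) : ℤ) : ℂ) := by
    simpa using aeval_algebraMap_apply ℂ (k : ℤ) g
  have hcast : N • Complex.exp k - p • aeval (k : ℂ) g
      = ((N * Real.exp 1 ^ k - p * g.eval (k : ℤ) : ℝ) : ℂ) := by
    simp [hg_eval, Real.exp_one_pow, zsmul_eq_mul, nsmul_eq_mul, Complex.ofReal_exp]
  rwa [hcast, Complex.norm_real, Real.norm_eq_abs] at h

theorem abs_coeff_zero_mul_add_sum_le {x : ℝ} {a : ℤ[X]} (ha : aeval x a = 0) (N p : ℤ)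
    (m : ℕ → ℤ) {ε : ℝ} (hm : ∀ k ∈ Icc 1 a.natDegree, |N * x ^ k - p * m k| ≤ ε) :
    |((a.coeff 0 * N + p * ∑ k ∈ Icc 1 a.natDegree, a.coeff k * m k : ℤ) : ℝ)|
      ≤ (∑ k ∈ Icc 1 a.natDegree, |(a.coeff k : ℝ)|) * ε := by
  have hx : (a.coeff 0 : ℝ) + ∑ k ∈ Icc 1 a.natDegree, (a.coeff k : ℝ) * x ^ k = 0 := by
    rw [← ha, aeval_eq_sum_range, range_eq_Ico, sum_eq_sum_Ico_succ_bot (Nat.succ_pos _)]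
    simp [zsmul_eq_mul, Ico_add_one_right_eq_Icc]
  have hsplit : ∑ k ∈ Icc 1 a.natDegree, (a.coeff k : ℝ) * (N * x ^ k - p * m k)
      = N * ∑ k ∈ Icc 1 a.natDegree, (a.coeff k : ℝ) * x ^ k
        - p * ∑ k ∈ Icc 1 a.natDegree, (a.coeff k : ℝ) * m k := by
    rw [mul_sum, mul_sum, ← sum_sub_distrib]
    exact sum_congr rfl fun k _ => by ring
  have hM : ((a.coeff 0 * N + p * ∑ k ∈ Icc 1 a.natDegree, a.coeff k * m k : ℤ) : ℝ)
      = -∑ k ∈ Icc 1 a.natDegree, (a.coeff k : ℝ) * (N * x ^ k - p * m k) := by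
    push_cast
    linear_combination (N : ℝ) * hx + hsplit
  calc _ = |∑ k ∈ Icc 1 a.natDegree, (a.coeff k : ℝ) * (N * x ^ k - p * m k)| := by
        rw [hM, abs_neg]
    _ ≤ ∑ k ∈ Icc 1 a.natDegree, |(a.coeff k : ℝ)| * |N * x ^ k - p * m k| := by
        simpa only [abs_mul] using
          abs_sum_le_sum_abs (fun k => (a.coeff k : ℝ) * (N * x ^ k - p * m k)) _
    _ ≤ ∑ k ∈ Icc 1 a.natDegree, |(a.coeff k : ℝ)| * ε :=
        sum_le_sum fun k hk => mul_le_mul_of_nonneg_left (hm k hk) (abs_nonneg _)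
    _ = _ := (sum_mul ..).symm

/-- Hermite (1873): `e` is transcendental over `ℚ`. -/
theorem e_transcendental : Transcendental ℚ (Real.exp 1) := by
  intro he
  obtain ⟨a, hae, ha0⟩ := exists_aeval_eq_zero_coeff_zero_ne_zero (Real.exp_ne_zero 1) he
  obtain ⟨c, hc⟩ := exists_int_approx_exp_one_pow a.natDegree
  set S := ∑ k ∈ Icc 1 a.natDegree, |(a.coeff k : ℝ)|
  have hsmall : ∀ᶠ p : ℕ in atTop, S * (c ^ p / (p - 1)!) < 1 := by
    have := (tendsto_pow_div_factorial_sub_one_atTop c).const_mul S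
    rw [mul_zero] at this
    exact this.eventually_lt_const one_pos
  obtain ⟨p, hp, hpa, hpS, hpc⟩ :=
    ((Nat.frequently_atTop_iff_infinite.mpr Nat.infinite_setOfPred_prime).and_eventually
      ((eventually_gt_atTop (a.coeff 0).natAbs).and (hsmall.and hc))).exists
  obtain ⟨N, hpN, m, hm⟩ := hpc hp
  have hM : a.coeff 0 * N + p * ∑ k ∈ Icc 1 a.natDegree, a.coeff k * m k = 0 := by
    rw [← Int.abs_lt_one_iff, ← Int.cast_lt (R := ℝ), Int.cast_abs, Int.cast_one]
    exact (abs_coeff_zero_mul_add_sum_le hae N p m (by exact_mod_cast hm)).trans_lt hpS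
  have hdvd : (p : ℤ) ∣ a.coeff 0 * N := (dvd_add_left (dvd_mul_right _ _)).mp (hM ▸ dvd_zero _)
  rcases Int.Prime.dvd_mul' hp hdvd with h | h
  · exact hpa.not_ge (Nat.le_of_dvd (Int.natAbs_pos.mpr ha0) (Int.natCast_dvd.mp h))
  · exact hpN h
end

section
/- A sequence a : ℕ → A with values in a finite set A is k-automatic if and only if its k-kernel K_k(a) = { (a(kʳ·n + j))_{n≥0} : r ≥ 0, 0 ≤ j < kʳ } is a finite set of sequences. -/
/-- `a : ℕ → A` is `k`-automatic: there is a finite automaton (finite state set `S`,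
initial state `init`, transition function `δ` reading base-`k` digits, output map `out`)
computing `a n` from the base-`k` expansion of `n`. -/
def IsAutomatic {A : Type*} (k : ℕ) (a : ℕ → A) : Prop :=
  ∃ (S : Type) (_ : Fintype S) (init : S) (δ : S → ℕ → S) (out : S → A),
    ∀ n : ℕ, a n = out ((Nat.digits k n).foldl δ init)

/-- The `k`-kernel of the sequence `a`: the set of subsequences `n ↦ a (kʳ n + j)`
for `r ≥ 0` and `0 ≤ j < kʳ`. -/
def kernel {A : Type*} (k : ℕ) (a : ℕ → A) : Set (ℕ → A) :=
  {s | ∃ r j : ℕ, j < k ^ r ∧ s = fun n => a (k ^ r * n + j)}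

/-!
Digits are read least significant first, so after reading the `r` low digits of `kʳ n + j`
(those of `j`, padded with zeros) an automaton computing `a` is in a state `q` from which it
computes `a (kʳ n + j)` on the remaining digits of `n`. Hence each kernel sequence is
determined by `q` and the state reached on `j` (which gives the value at `n = 0`), and there are
finitely many. Conversely, the kernel is closed under `s ↦ (n ↦ s (d + k n))` for digits `d`,
and this operation, started at `a` and fed the digits of `n`, leads to `m ↦ a (n + kˡ m)`; so the
kernel itself is the state set of an automaton, with output `s ↦ s 0`.
-/

open Nat

theorem Nat.digits_add_base_pow_mul {b r j n : ℕ} (hb : 1 < b) (hj : j < b ^ r) (hn : n ≠ 0) :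
    digits b (j + b ^ r * n) = digitsAppend b r j ++ digits b n := by
  have hlen : (digits b j).length ≤ r := (digits_length_le_iff hb j).mpr hj
  rw [digitsAppend, digits_append_zeroes_append_digits hb (pos_of_ne_zero hn),
    Nat.add_sub_cancel' hlen]

theorem List.foldl_shift_apply {A : Type*} (k : ℕ) (L : List ℕ) (s : ℕ → A) (m : ℕ) :
    L.foldl (fun s d n => s (d + k * n)) s m = s (ofDigits k L + k ^ L.length * m) := by
  induction L generalizing s with
  | nil => simp [ofDigits]
  | cons d L ih =>
    rw [List.foldl_cons, ih, ofDigits_cons, List.length_cons, pow_succ]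
    ring_nf

section Automaton

variable {A : Type*} {k : ℕ} {a : ℕ → A}

theorem isAutomatic_of_finite {S : Type*} [Finite S] (init : S) (δ : S → ℕ → S) (out : S → A)
    (h : ∀ n, a n = out ((digits k n).foldl δ init)) : IsAutomatic k a := by
  obtain ⟨N, ⟨e⟩⟩ := Finite.exists_equiv_fin S
  refine ⟨Fin N, inferInstance, e init, fun i d => e (δ (e.symm i) d), out ∘ e.symm, fun n => ?_⟩
  rw [List.foldl_hom e fun x y => by rw [e.symm_apply_apply], h n, Function.comp_apply,
    e.symm_apply_apply]

theorem isAutomatic_of_finite_invariant {X : Type*} (hk : 1 < k) {K : Set X} (hK : K.Finite)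
    {init : X} (hinit : init ∈ K) (δ : X → ℕ → X) (hδ : ∀ x ∈ K, ∀ d < k, δ x d ∈ K)
    (out : X → A) (h : ∀ n, a n = out ((digits k n).foldl δ init)) : IsAutomatic k a := by
  have := hK.to_subtype
  let δK : K → ℕ → K := fun x d => if hd : d < k then ⟨δ x d, hδ x x.2 d hd⟩ else x
  have foldl_val : ∀ L : List ℕ, (∀ d ∈ L, d < k) → ∀ x : K, (L.foldl δK x).1 = L.foldl δ x := by
    intro L hL
    induction L with
    | nil => exact fun _ => rfl
    | cons d L ih =>
      intro x
      have hd : d < k := hL d List.mem_cons_self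
      rw [List.foldl_cons, List.foldl_cons, ih fun e he => hL e (List.mem_cons_of_mem d he)]
      simp only [δK, dif_pos hd]
  refine isAutomatic_of_finite ⟨init, hinit⟩ δK (out ·.1) fun n => ?_
  rw [h n, foldl_val _ (fun d hd => digits_lt_base hk hd)]

theorem IsAutomatic.kernel_finite (hk : 1 < k) (ha : IsAutomatic k a) : (kernel k a).Finite := by
  obtain ⟨S, _, init, δ, out, ha⟩ := ha
  refine (Set.finite_range fun p : S × S => fun n =>
    if n = 0 then out p.1 else out ((digits k n).foldl δ p.2)).subset ?_
  rintro _ ⟨r, j, hj, rfl⟩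
  refine ⟨((digits k j).foldl δ init, (digitsAppend k r j).foldl δ init), funext fun n => ?_⟩
  rcases eq_or_ne n 0 with rfl | hn
  · simp [ha]
  · simp [hn, ha, add_comm (k ^ r * n), digits_add_base_pow_mul hk hj hn, List.foldl_append]

theorem self_mem_kernel : a ∈ kernel k a :=
  ⟨0, 0, Nat.one_pos, by simp⟩

theorem shift_mem_kernel {s : ℕ → A} (hs : s ∈ kernel k a) {d : ℕ} (hd : d < k) :
    (fun n => s (d + k * n)) ∈ kernel k a := by
  obtain ⟨r, j, hj, rfl⟩ := hs
  refine ⟨r + 1, j + k ^ r * d, ?_, funext fun n => by ring_nf⟩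
  calc j + k ^ r * d < k ^ r * (d + 1) := by linarith
    _ ≤ k ^ r * k := Nat.mul_le_mul_left _ hd
    _ = k ^ (r + 1) := (pow_succ k r).symm

theorem isAutomatic_of_kernel_finite (hk : 1 < k) (hfin : (kernel k a).Finite) :
    IsAutomatic k a :=
  isAutomatic_of_finite_invariant hk hfin self_mem_kernel (fun s d n => s (d + k * n))
    (fun _ hs _ hd => shift_mem_kernel hs hd) (· 0) fun n => by
      rw [List.foldl_shift_apply, ofDigits_digits, mul_zero, add_zero]

end Automaton

theorem eilenberg_general {A : Type*} (k : ℕ) (hk : 2 ≤ k) (a : ℕ → A) :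
    IsAutomatic k a ↔ (kernel k a).Finite :=
  ⟨IsAutomatic.kernel_finite hk, isAutomatic_of_kernel_finite hk⟩

/-- Eilenberg's theorem: a sequence with values in a finite set is `k`-automatic if and
only if its `k`-kernel is finite. -/
theorem eilenberg {A : Type*} [Finite A] (k : ℕ) (hk : 2 ≤ k) (a : ℕ → A) :
    IsAutomatic k a ↔ (kernel k a).Finite :=
  eilenberg_general k hk a
end
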